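/- Let f = x₀x₃² + x₁x₃x₄ + x₂x₄² over a field K of characteristic zero and A = Q/Ann_f. Then A fails the Strong Lefschetz Property: for every linear form L ∈ A₁, the multiplication map L: A₁ → A₂ is not an isomorphism. -/

import Mathlib

open MvPolynomial

/-- The action of a polynomial differential operator `α ∈ Q = K[X₀,…,X_N]` on
`f ∈ R = K[x₀,…,x_N]`, where the variable `Xᵢ` acts as `∂/∂xᵢ`. -/
noncomputable def applyOp {K : Type*} [CommSemiring K] {n : ℕ}
    (α f : MvPolynomial (Fin n) K) : MvPolynomial (Fin n) K :=
  ∑ m ∈ α.support,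
    α.coeff m •
      ((List.ofFn fun i : Fin n =>
          ((pderiv i).toLinearMap ^ m i : Module.End K (MvPolynomial (Fin n) K))).prod f)

/-!
For `α = a X₀ + b X₁ + c X₂` the operator `α` sends `f` to the binary quadric
`q = a x₃² + b x₃x₄ + c x₄²`, and a linear form `L = ∑ lᵢ Xᵢ` acts on `q` only through
`l₃ ∂₃ + l₄ ∂₄`. So `(Lα)(f) = L(q) = 0` is a system of two linear equations in the three
unknowns `a, b, c`, which has a solution with `q ≠ 0`. The differentiations are organised by
identifying `α ↦ α(·)` with evaluation of `α` at the commuting operators `∂ᵢ`.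
-/

namespace MvPolynomial

variable {R σ : Type*} [CommSemiring R]

theorem pderiv_pderiv_comm (i j : σ) (p : MvPolynomial σ R) :
    pderiv i (pderiv j p) = pderiv j (pderiv i p) := by
  classical
  induction p using MvPolynomial.induction_on with
  | C c => simp
  | add p q hp hq => simp [hp, hq]
  | mul_X p k hp =>
    simp only [pderiv_mul, map_add, pderiv_X, hp, Pi.single_apply]
    split_ifs <;> simp; ring

theorem IsHomogeneous.eq_sum_C_mul_X [Fintype σ] {φ : MvPolynomial σ R} (hφ : φ.IsHomogeneous 1) :
    φ = ∑ i, C (coeff (Finsupp.single i 1) φ) * X i := by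
  classical
  ext m
  by_cases hm : m ∈ Set.range fun i => Finsupp.single i 1
  · obtain ⟨i, rfl⟩ := hm
    simp [coeff_sum]
  · have hm' : coeff m φ = 0 := by
      by_contra h
      refine hm (Finsupp.range_single_one ▸ ?_)
      rw [Set.mem_ofPred_eq, Finsupp.degree_eq_weight_one]
      exact hφ h
    simp only [hm', coeff_sum, coeff_C_mul, coeff_X]
    exact (Finset.sum_eq_zero fun i _ => by rw [if_neg fun h => hm ⟨i, h⟩, mul_zero]).symm

end MvPolynomial

section DiffOps

variable {K : Type*} [CommSemiring K] {n : ℕ}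

variable (K n) in
noncomputable abbrev diffOps : Subalgebra K (Module.End K (MvPolynomial (Fin n) K)) :=
  Algebra.adjoin K (Set.range fun i => (pderiv i).toLinearMap)

instance : IsMulCommutative (diffOps K n) :=
  Algebra.isMulCommutative_adjoin K <| by
    rintro _ ⟨i, rfl⟩ _ ⟨j, rfl⟩
    exact LinearMap.ext (pderiv_pderiv_comm i j)

open scoped IsMulCommutative

noncomputable def diffOp (i : Fin n) : diffOps K n :=
  ⟨(pderiv i).toLinearMap, Algebra.subset_adjoin ⟨i, rfl⟩⟩

theorem applyOp_eq_aeval (α f : MvPolynomial (Fin n) K) :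
    applyOp α f = ((aeval diffOp α : diffOps K n) : Module.End K (MvPolynomial (Fin n) K)) f := by
  rw [aeval_def, eval₂_eq', applyOp]
  push_cast
  rw [Finset.sum_apply]
  refine Finset.sum_congr rfl fun m _ => ?_
  rw [← List.prod_ofFn]
  simp only [SubmonoidClass.coe_list_prod, List.map_ofFn, Module.End.mul_apply,
    Module.algebraMap_end_apply]
  rfl

theorem applyOp_add (α β f : MvPolynomial (Fin n) K) :
    applyOp (α + β) f = applyOp α f + applyOp β f := by
  simp only [applyOp_eq_aeval, map_add, Subalgebra.coe_add, LinearMap.add_apply]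

theorem applyOp_mul (α β f : MvPolynomial (Fin n) K) :
    applyOp (α * β) f = applyOp α (applyOp β f) := by
  simp only [applyOp_eq_aeval, map_mul, Subalgebra.coe_mul, Module.End.mul_apply]

theorem applyOp_sum {ι : Type*} (s : Finset ι) (α : ι → MvPolynomial (Fin n) K)
    (f : MvPolynomial (Fin n) K) : applyOp (∑ i ∈ s, α i) f = ∑ i ∈ s, applyOp (α i) f := by
  simp only [applyOp_eq_aeval, map_sum, AddSubmonoidClass.coe_finsetSum, LinearMap.coe_sum,
    Finset.sum_apply]

theorem applyOp_C_mul (c : K) (α f : MvPolynomial (Fin n) K) :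
    applyOp (C c * α) f = c • applyOp α f := by
  simp only [applyOp_eq_aeval, map_mul, aeval_C, Subalgebra.coe_mul, Subalgebra.coe_algebraMap,
    Module.End.mul_apply, Module.algebraMap_end_apply]

theorem applyOp_X (i : Fin n) (f : MvPolynomial (Fin n) K) : applyOp (X i) f = pderiv i f := by
  rw [applyOp_eq_aeval, aeval_X]
  rfl

theorem applyOp_of_isHomogeneous_one {L : MvPolynomial (Fin n) K} (hL : L.IsHomogeneous 1)
    (g : MvPolynomial (Fin n) K) :
    applyOp L g = ∑ i, coeff (Finsupp.single i 1) L • pderiv i g := by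
  conv_lhs => rw [hL.eq_sum_C_mul_X]
  simp only [applyOp_sum, applyOp_C_mul, applyOp_X]

end DiffOps

theorem C_mul_X_sq_add_C_mul_X_mul_X_add_C_mul_X_sq_ne_zero {R σ : Type*} [CommSemiring R]
    {i j : σ} (hij : i ≠ j) {a b c : R} (h : a ≠ 0 ∨ c ≠ 0) :
    C a * X i ^ 2 + C b * (X i * X j) + C c * X j ^ 2 ≠ 0 := by
  classical
  intro h0
  rcases h with ha | hc
  · exact ha (by simpa [hij] using congrArg (eval (Pi.single i 1)) h0)
  · exact hc (by simpa [hij.symm] using congrArg (eval (Pi.single j 1)) h0)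

theorem exists_binary_quadric_annihilated {K : Type*} [CommRing K] [IsDomain K] (p q : K) :
    ∃ a b c : K, (a ≠ 0 ∨ c ≠ 0) ∧ 2 * p * a + q * b = 0 ∧ p * b + 2 * q * c = 0 := by
  by_cases hpq : p = 0 ∧ q = 0
  · exact ⟨1, 0, 0, .inl one_ne_zero, by simp [hpq.1], by simp [hpq.2]⟩
  · -- `(q², -2pq, p²)` is half the cross product of the rows `(2p, q, 0)` and `(0, p, 2q)`.
    refine ⟨q ^ 2, -2 * p * q, p ^ 2, ?_, by ring, by ring⟩
    rw [not_and_or, or_comm] at hpq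
    exact hpq.imp (pow_ne_zero 2) (pow_ne_zero 2)

section Perazzo

variable {K : Type*} [CommSemiring K]

noncomputable def perazzoCubic : MvPolynomial (Fin 5) K :=
  X 0 * X 3 ^ 2 + X 1 * X 3 * X 4 + X 2 * X 4 ^ 2

theorem applyOp_perazzoCubic (a b c : K) :
    applyOp (C a * X 0 + C b * X 1 + C c * X 2) perazzoCubic =
      C a * X 3 ^ 2 + C b * (X 3 * X 4) + C c * X 4 ^ 2 := by
  simp only [perazzoCubic, applyOp_add, applyOp_C_mul, applyOp_X, map_add, Derivation.leibniz,
    Derivation.leibniz_pow, pderiv_X, Pi.single_eq_of_ne, Pi.single_eq_same, ne_eq, Fin.reduceEq,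
    not_false_eq_true, smul_eq_mul, smul_eq_C_mul, nsmul_zero, mul_zero, mul_one, zero_add,
    add_zero, Nat.add_one_sub_one, pow_one]
  ring

theorem applyOp_mul_perazzoCubic {L : MvPolynomial (Fin 5) K} (hL : L.IsHomogeneous 1)
    (a b c : K) :
    applyOp (L * (C a * X 0 + C b * X 1 + C c * X 2)) perazzoCubic =
      C (2 * coeff (Finsupp.single 3 1) L * a + coeff (Finsupp.single 4 1) L * b) * X 3 +
      C (coeff (Finsupp.single 3 1) L * b + 2 * coeff (Finsupp.single 4 1) L * c) * X 4 := by
  rw [applyOp_mul, applyOp_perazzoCubic, applyOp_of_isHomogeneous_one hL]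
  simp only [Fin.sum_univ_five, map_add, Derivation.leibniz, Derivation.leibniz_pow, pderiv_X,
    derivation_C, Pi.single_apply, Fin.reduceEq, ↓reduceIte, smul_eq_mul, smul_eq_C_mul, smul_add,
    smul_zero, nsmul_eq_mul, Nat.cast_ofNat, mul_ite, mul_one, mul_zero, smul_ite,
    add_zero, zero_add, Nat.add_one_sub_one, pow_one, C_mul, map_ofNat]
  ring

end Perazzo

theorem perazzo_cubic_fails_SLP_general (K : Type*) [Field K]
    (f : MvPolynomial (Fin 5) K)
    (hf : f = X 0 * X 3 ^ 2 + X 1 * X 3 * X 4 + X 2 * X 4 ^ 2) :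
    ∀ L : MvPolynomial (Fin 5) K, L.IsHomogeneous 1 →
      ∃ α : MvPolynomial (Fin 5) K, α.IsHomogeneous 1 ∧
        applyOp α f ≠ 0 ∧ applyOp (L * α) f = 0 := by
  intro L hL
  obtain rfl : f = perazzoCubic := hf
  obtain ⟨a, b, c, hac, h₃, h₄⟩ :=
    exists_binary_quadric_annihilated (coeff (Finsupp.single 3 1) L) (coeff (Finsupp.single 4 1) L)
  refine ⟨C a * X 0 + C b * X 1 + C c * X 2, ?_, ?_, ?_⟩
  · exact ((isHomogeneous_C_mul_X _ _).add (isHomogeneous_C_mul_X _ _)).add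
      (isHomogeneous_C_mul_X _ _)
  · rw [applyOp_perazzoCubic]
    exact C_mul_X_sq_add_C_mul_X_mul_X_add_C_mul_X_sq_ne_zero (by decide) hac
  · rw [applyOp_mul_perazzoCubic hL, h₃, h₄]
    simp

/-- For `f = x₀x₃² + x₁x₃x₄ + x₂x₄²`, `A = Q/Ann_f` fails the Strong
Lefschetz Property: for every linear form `L ∈ A₁`, multiplication `L : A₁ → A₂` is
not an isomorphism.  Since `dim A₁ = dim A₂ = 5`, this is equivalent to saying that
for every linear form `L` there is `α ∈ Q₁` whose class in `A₁` is nonzero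
(`α(f) ≠ 0`) but whose image `Lα` lies in `Ann_f` (`(Lα)(f) = 0`), i.e. `μ_L` has a
nontrivial kernel. -/
theorem perazzo_cubic_fails_SLP (K : Type*) [Field K] [CharZero K]
    (f : MvPolynomial (Fin 5) K)
    (hf : f = X 0 * X 3 ^ 2 + X 1 * X 3 * X 4 + X 2 * X 4 ^ 2) :
    ∀ L : MvPolynomial (Fin 5) K, L.IsHomogeneous 1 →
      ∃ α : MvPolynomial (Fin 5) K, α.IsHomogeneous 1 ∧
        applyOp α f ≠ 0 ∧ applyOp (L * α) f = 0 :=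
  perazzo_cubic_fails_SLP_general K f hf
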